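/- arXiv:1909.13848 — 3 statements merged into one kernel-verified Lean document; each statement's English description precedes it below -/
import Mathlib

section
/- Let $V$ be a type, $D : V \to V \to \mathrm{Prop}$ a digraph, and $v \in V$. Define the bypassed digraph $D/v$ on $V \setminus \{v\}$ by $(D/v)\ a\ b \iff D\ a\ b \vee (D\ a\ v \wedge D\ v\ b)$. Then for all $u, w \in V$ with $u \neq v$ and $w \neq v$: $u$ reaches $w$ in $D$ (via $\mathrm{ReflTransGen}$) if and only if $u$ reaches $w$ in $D/v$ via a path whose intermediate vertices avoid $v$; formally, $\mathrm{ReflTransGen}\ D\ u\ w \iff \mathrm{ReflTransGen}\ (\lambda a\, b,\ (D\ a\ b \vee (D\ a\ v \wedge D\ v\ b)) \wedge a \neq v \wedge b \neq v)\ u\ w$. -/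
theorem stmt_6 {V : Type*} (D : V → V → Prop) (v : V) (u w : V)
    (hu : u ≠ v) (hw : w ≠ v) :
    Relation.ReflTransGen D u w ↔
      Relation.ReflTransGen
        (fun a b => (D a b ∨ (D a v ∧ D v b)) ∧ a ≠ v ∧ b ≠ v) u w := by
  constructor
  · intro h
    have key : ∀ x, Relation.ReflTransGen D x w →
        (x ≠ v → Relation.ReflTransGen
          (fun a b => (D a b ∨ (D a v ∧ D v b)) ∧ a ≠ v ∧ b ≠ v) x w) ∧
        (x = v → ∃ c, c ≠ v ∧ D v c ∧ Relation.ReflTransGen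
          (fun a b => (D a b ∨ (D a v ∧ D v b)) ∧ a ≠ v ∧ b ≠ v) c w) := by
      intro x hx
      induction hx using Relation.ReflTransGen.head_induction_on with
      | refl => exact ⟨fun _ => .refl, fun h => absurd h hw⟩
      | head hab hbw ih =>
        rename_i a c
        refine ⟨?_, ?_⟩
        · intro ha
          by_cases hc : c = v
          · subst hc
            obtain ⟨c', hc', hvc', hrest⟩ := ih.2 rfl
            exact hrest.head ⟨Or.inr ⟨hab, hvc'⟩, ha, hc'⟩
          · exact (ih.1 hc).head ⟨Or.inl hab, ha, hc⟩
        · intro ha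
          by_cases hc : c = v
          · exact ih.2 hc
          · exact ⟨c, hc, ha ▸ hab, ih.1 hc⟩
    exact (key u h).1 hu
  · intro h
    clear hw
    induction h with
    | refl => exact .refl
    | tail _ hbc ih =>
      obtain ⟨hd, -, -⟩ := hbc
      rcases hd with hd | ⟨h1, h2⟩
      · exact ih.tail hd
      · exact (ih.tail h1).tail h2
end

section
/- Let $V$ be a type, $S, Z \subseteq V$ disjoint sets, and let $l$ be a duplicate-free list over $V$ with the following property: for any two positions $i < j$ of $l$ with $l_i \in S$, $l_j \in S$, and some position $m$ with $i < m < j$ and $l_m \notin S \cup Z$, there exists a position $m'$ with $i < m' < j$ and $l_{m'} \in Z$. Then the number of maximal contiguous blocks of $l$ consisting of elements of $S$ is at most $(\text{the number of elements of } Z \text{ occurring in } l) + 1$. In particular, if $|Z| \leq w$ then $l$ has at most $w + 1$ maximal $S$-blocks. -/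
/-!
Let `p < q` be two starts of maximal `S`-blocks. The entry just before `q` lies outside `S`, so it
is either in `Z` or, by the guard hypothesis, some entry strictly between `p` and `q` is in `Z`.
Hence the block starts are separated by `Z`-positions, and sending each block start but the last
to the first `Z`-position after it is strictly monotone. Since `l` has no duplicates, distinct
`Z`-positions carry distinct elements of `Z`.
-/

open Finset

theorem Finset.card_le_card_add_one_of_exists_between {α : Type*} [LinearOrder α]
    {T M : Finset α} (h : ∀ p ∈ T, ∀ q ∈ T, p < q → ∃ m ∈ M, p < m ∧ m < q) :
    #T ≤ #M + 1 := by
  rcases T.eq_empty_or_nonempty with rfl | hT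
  · simp
  have hM : ∀ p ∈ T.erase (T.max' hT), (M.filter (p < ·)).Nonempty := by
    intro p hp
    obtain ⟨m, hm, hpm, -⟩ := h p (mem_of_mem_erase hp) _ (T.max'_mem hT)
      (lt_of_le_of_ne (T.le_max' p (mem_of_mem_erase hp)) (ne_of_mem_erase hp))
    exact ⟨m, mem_filter.2 ⟨hm, hpm⟩⟩
  let f : α → α := fun p => if hp : p ∈ T.erase (T.max' hT) then (M.filter (p < ·)).min' (hM p hp)
    else p
  have hf_mem : ∀ p ∈ T.erase (T.max' hT), f p ∈ M.filter (p < ·) := fun p hp => by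
    simp only [f, dif_pos hp]
    exact min'_mem _ _
  have hf_mono : StrictMonoOn f (T.erase (T.max' hT)) := by
    intro p hp q hq hpq
    rw [mem_coe] at hp hq
    obtain ⟨m, hm, hpm, hmq⟩ := h p (mem_of_mem_erase hp) q (mem_of_mem_erase hq) hpq
    calc f p ≤ m := by
          simp only [f, dif_pos hp]
          exact min'_le _ _ (mem_filter.2 ⟨hm, hpm⟩)
      _ < q := hmq
      _ < f q := (mem_filter.1 (hf_mem q hq)).2
  have hcard := card_le_card_of_injOn f (fun p hp => (mem_filter.1 (hf_mem p hp)).1) hf_mono.injOn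
  rw [card_erase_of_mem (T.max'_mem hT)] at hcard
  omega

section BlockStarts

variable {V : Type*} [DecidableEq V] (S Z : Finset V) (l : List V)

def List.blockStarts : Finset (Fin l.length) :=
  univ.filter fun i => l.get i ∈ S ∧ ∀ j : Fin l.length, (j : ℕ) + 1 = i → l.get j ∉ S

def List.positionsIn : Finset (Fin l.length) := univ.filter fun i => l.get i ∈ Z

variable {S Z l}

theorem List.exists_positionsIn_between_blockStarts
    (hguard : ∀ i j m : Fin l.length, i < m → m < j →
      l.get i ∈ S → l.get j ∈ S → l.get m ∉ S → l.get m ∉ Z →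
      ∃ m' : Fin l.length, i < m' ∧ m' < j ∧ l.get m' ∈ Z) :
    ∀ p ∈ l.blockStarts S, ∀ q ∈ l.blockStarts S, p < q →
      ∃ m ∈ l.positionsIn Z, p < m ∧ m < q := by
  intro p hp q hq hpq
  simp only [blockStarts, Finset.mem_filter, Finset.mem_univ, true_and] at hp hq
  let m : Fin l.length := ⟨q - 1, by omega⟩
  have hmS : l.get m ∉ S := hq.2 m (by simp only [m]; omega)
  have hpm : p < m := by
    have hpm' : (p : ℕ) ≠ q - 1 := fun h => hmS (Fin.ext (b := m) h ▸ hp.1)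
    rw [Fin.lt_def] at hpq ⊢
    exact lt_of_le_of_ne (Nat.le_sub_one_of_lt hpq) hpm'
  have hmq : m < q := Fin.lt_def.2 (Nat.sub_one_lt_of_lt hpq)
  by_cases hmZ : l.get m ∈ Z
  · exact ⟨m, by simpa [positionsIn] using hmZ, hpm, hmq⟩
  · obtain ⟨m', hpm', hm'q, hm'Z⟩ := hguard p q m hpm hmq hp.1 hq.1 hmS hmZ
    exact ⟨m', by simpa [positionsIn] using hm'Z, hpm', hm'q⟩

theorem List.card_positionsIn_le (hnd : l.Nodup) :
    #(l.positionsIn Z) ≤ #(l.toFinset.filter (· ∈ Z)) :=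
  card_le_card_of_injOn l.get
    (fun i hi => Finset.mem_filter.2 ⟨mem_toFinset.2 (l.get_mem i), (Finset.mem_filter.1 hi).2⟩)
    (List.nodup_iff_injective_get.1 hnd).injOn

end BlockStarts

theorem stmt_13_general {V : Type*} [DecidableEq V] (S Z : Finset V)
    (l : List V) (hnd : l.Nodup)
    (hguard : ∀ i j m : Fin l.length, i < m → m < j →
      l.get i ∈ S → l.get j ∈ S → l.get m ∉ S → l.get m ∉ Z →
      ∃ m' : Fin l.length, i < m' ∧ m' < j ∧ l.get m' ∈ Z) :
    (Finset.univ.filter (fun i : Fin l.length =>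
        l.get i ∈ S ∧ ∀ j : Fin l.length, (j : ℕ) + 1 = (i : ℕ) → l.get j ∉ S)).card ≤
      (l.toFinset.filter (fun x => x ∈ Z)).card + 1 ∧
    ∀ w : ℕ, Z.card ≤ w →
      (Finset.univ.filter (fun i : Fin l.length =>
        l.get i ∈ S ∧ ∀ j : Fin l.length, (j : ℕ) + 1 = (i : ℕ) → l.get j ∉ S)).card ≤ w + 1 := by
  change #(l.blockStarts S) ≤ _ ∧ ∀ w : ℕ, #Z ≤ w → #(l.blockStarts S) ≤ w + 1
  have hblocks : #(l.blockStarts S) ≤ #(l.toFinset.filter (· ∈ Z)) + 1 :=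
    (card_le_card_add_one_of_exists_between
      (List.exists_positionsIn_between_blockStarts hguard)).trans
      (Nat.add_le_add_right (List.card_positionsIn_le hnd) 1)
  refine ⟨hblocks, fun w hw => ?_⟩
  have hZ : #(l.toFinset.filter (· ∈ Z)) ≤ #Z := card_le_card fun x hx => (mem_filter.1 hx).2
  omega

theorem stmt_13 {V : Type*} [DecidableEq V] (S Z : Finset V) (hSZ : Disjoint S Z)
    (l : List V) (hnd : l.Nodup)
    (hguard : ∀ i j m : Fin l.length, i < m → m < j →
      l.get i ∈ S → l.get j ∈ S → l.get m ∉ S → l.get m ∉ Z →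
      ∃ m' : Fin l.length, i < m' ∧ m' < j ∧ l.get m' ∈ Z) :
    (Finset.univ.filter (fun i : Fin l.length =>
        l.get i ∈ S ∧ ∀ j : Fin l.length, (j : ℕ) + 1 = (i : ℕ) → l.get j ∉ S)).card ≤
      (l.toFinset.filter (fun x => x ∈ Z)).card + 1 ∧
    ∀ w : ℕ, Z.card ≤ w →
      (Finset.univ.filter (fun i : Fin l.length =>
        l.get i ∈ S ∧ ∀ j : Fin l.length, (j : ℕ) + 1 = (i : ℕ) → l.get j ∉ S)).card ≤ w + 1 :=
  stmt_13_general S Z l hnd hguard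
end

section
/- Let $V$ be a finite type, $D : V \to V \to \mathrm{Prop}$ a digraph, $X$ a finite subset of $V$, and $(s_1,t_1), \ldots, (s_k,t_k)$ requests with all $s_i, t_i \notin X$. Then the following are equivalent: (a) there exist $D$-walks $P_1, \ldots, P_k$ with $P_i$ from $s_i$ to $t_i$ such that every vertex of $X$ occurs in at most one of the walks; (b) there exists a partition of $X$ into (possibly empty) sets $X_1, \ldots, X_k$ such that for every $i \in [k]$, $s_i$ reaches $t_i$ in $D$ avoiding all vertices of $X \setminus X_i$. -/
private lemma aux_mem {V : Type*} {D : V → V → Prop} {Q : V → Prop} (s : V) (P : List V)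
    (h : List.Chain (fun a b => D a b ∧ Q a ∧ Q b) s P) (hs : Q s) :
    ∀ v ∈ s :: P, Q v := by
  induction P generalizing s with
  | nil => simpa
  | cons b l ih =>
    rcases List.chain_cons.mp h with ⟨⟨_, _, hb⟩, hl⟩
    intro v hv
    rcases List.mem_cons.mp hv with rfl | hv
    · exact hs
    · exact ih b hl hb v hv

private lemma aux_rtg {V : Type*} {D : V → V → Prop} {Q : V → Prop} (s : V) (P : List V)
    (h : List.Chain D s P) (hQ : ∀ v ∈ s :: P, Q v) :
    Relation.ReflTransGen (fun a b => D a b ∧ Q a ∧ Q b) s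
      ((s :: P).getLast (List.cons_ne_nil _ _)) := by
  induction P generalizing s with
  | nil => exact Relation.ReflTransGen.refl
  | cons b l ih =>
    rcases List.chain_cons.mp h with ⟨hsb, hl⟩
    have h2 := ih b hl (fun v hv => hQ v (List.mem_cons_of_mem _ hv))
    have hstep : Relation.ReflTransGen (fun a b => D a b ∧ Q a ∧ Q b) s
        ((b :: l).getLast (List.cons_ne_nil _ _)) :=
      Relation.ReflTransGen.head ⟨hsb, hQ s (by simp), hQ b (by simp)⟩ h2
    rwa [List.getLast_cons (List.cons_ne_nil _ _)]

theorem stmt_15 {V : Type*} [Fintype V] [DecidableEq V] (D : V → V → Prop)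
    (k : ℕ) (hk : 0 < k) (X : Finset V) (src tgt : Fin k → V)
    (hsrc : ∀ i, src i ∉ X) (htgt : ∀ i, tgt i ∉ X) :
    (∃ P : Fin k → List V,
        (∀ i, List.Chain D (src i) (P i) ∧
          (src i :: P i).getLast (List.cons_ne_nil _ _) = tgt i) ∧
        ∀ x ∈ X, (Finset.univ.filter (fun i => x ∈ src i :: P i)).card ≤ 1) ↔
    (∃ Xs : Fin k → Finset V,
        (∀ i j, i ≠ j → Disjoint (Xs i) (Xs j)) ∧
        Finset.univ.biUnion Xs = X ∧
        ∀ i, Relation.ReflTransGen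
          (fun a b => D a b ∧ a ∉ X \ Xs i ∧ b ∉ X \ Xs i) (src i) (tgt i)) := by
  classical
  constructor
  · rintro ⟨P, hP, hcard⟩
    set W : Fin k → Finset V := fun i => X ∩ (src i :: P i).toFinset with hW
    have hWdisj : ∀ i j, i ≠ j → Disjoint (W i) (W j) := by
      intro i j hij
      rw [Finset.disjoint_left]
      intro x hxi hxj
      simp only [hW, Finset.mem_inter, List.mem_toFinset] at hxi hxj
      have hsub : ({i, j} : Finset (Fin k)) ⊆
          Finset.univ.filter (fun i => x ∈ src i :: P i) := by
        intro a ha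
        simp only [Finset.mem_insert, Finset.mem_singleton] at ha
        rcases ha with rfl | rfl
        · exact Finset.mem_filter.mpr ⟨Finset.mem_univ _, hxi.2⟩
        · exact Finset.mem_filter.mpr ⟨Finset.mem_univ _, hxj.2⟩
      have := (Finset.card_le_card hsub).trans (hcard x hxi.1)
      rw [Finset.card_pair hij] at this
      omega
    set L : Finset V := X \ Finset.univ.biUnion W with hL
    set i0 : Fin k := ⟨0, hk⟩ with hi0
    refine ⟨fun i => W i ∪ (if i = i0 then L else ∅), ?_, ?_, ?_⟩
    · intro i j hij
      have hLW : ∀ a, Disjoint L (W a) := by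
        intro a
        rw [Finset.disjoint_left]
        intro x hx hxa
        simp only [hL, Finset.mem_sdiff, Finset.mem_biUnion] at hx
        exact hx.2 ⟨a, Finset.mem_univ a, hxa⟩
      rw [Finset.disjoint_union_left, Finset.disjoint_union_right,
        Finset.disjoint_union_right]
      refine ⟨⟨hWdisj i j hij, ?_⟩, ?_, ?_⟩
      · split_ifs with h
        · exact (hLW i).symm
        · exact Finset.disjoint_empty_right _
      · split_ifs with h
        · exact hLW j
        · exact Finset.disjoint_empty_left _
      · split_ifs with h1 h2 h2
        · exact absurd (h1.trans h2.symm) hij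
        · exact Finset.disjoint_empty_right _
        · exact Finset.disjoint_empty_left _
        · exact Finset.disjoint_empty_left _
    · apply Finset.Subset.antisymm
      · intro x hx
        simp only [Finset.mem_biUnion, Finset.mem_union] at hx
        rcases hx with ⟨i, -, hx | hx⟩
        · exact (Finset.mem_inter.mp hx).1
        · split_ifs at hx with h
          · exact (Finset.mem_sdiff.mp hx).1
          · simp at hx
      · intro x hx
        by_cases h : ∃ i, x ∈ W i
        · obtain ⟨i, hi⟩ := h
          exact Finset.mem_biUnion.mpr ⟨i, Finset.mem_univ i, Finset.mem_union_left _ hi⟩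
        · refine Finset.mem_biUnion.mpr ⟨i0, Finset.mem_univ i0, Finset.mem_union_right _ ?_⟩
          rw [if_pos rfl]
          refine Finset.mem_sdiff.mpr ⟨hx, ?_⟩
          simp only [Finset.mem_biUnion]
          rintro ⟨i, -, hi⟩
          exact h ⟨i, hi⟩
    · intro i
      have hQ : ∀ v ∈ src i :: P i, v ∉ X \ (W i ∪ (if i = i0 then L else ∅)) := by
        intro v hv hvmem
        rw [Finset.mem_sdiff] at hvmem
        exact hvmem.2 (Finset.mem_union_left _
          (Finset.mem_inter.mpr ⟨hvmem.1, List.mem_toFinset.mpr hv⟩))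
      have := aux_rtg (D := D) (src i) (P i) (hP i).1 hQ
      rwa [(hP i).2] at this
  · rintro ⟨Xs, hdisj, hcover, hreach⟩
    have hsub : ∀ i, Xs i ⊆ X := by
      intro i x hx
      rw [← hcover]
      exact Finset.mem_biUnion.mpr ⟨i, Finset.mem_univ i, hx⟩
    choose P hchain hlast using fun i =>
      List.exists_isChain_cons_of_relationReflTransGen (hreach i)
    refine ⟨P, fun i => ⟨(hchain i).imp (fun a b h => h.1), hlast i⟩, ?_⟩
    intro x hx
    have key : ∀ i, x ∈ src i :: P i → x ∈ Xs i := by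
      intro i hxi
      have hmem := aux_mem (D := D) (src i) (P i) (hchain i)
        (by simp [Finset.mem_sdiff, hsrc i]) x hxi
      simp only [Finset.mem_sdiff, not_and, not_not] at hmem
      exact hmem hx
    rw [Finset.card_le_one]
    intro a ha b hb
    simp only [Finset.mem_filter] at ha hb
    by_contra hab
    exact Finset.disjoint_left.mp (hdisj a b hab) (key a ha.2) (key b hb.2)
end
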